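/- arXiv:2312.01161 — 4 statements merged into one kernel-verified Lean document; each statement's English description precedes it below -/
import Mathlib

section
/- Let Γ be an étale groupoid, K a compact subset of Γ, and N ⊆ K. Then the source image s[N] is nowhere dense in the unit space Γ⁰ if and only if N is nowhere dense in Γ. -/
open Filter Topology

/-- An étale groupoid: a groupoid (partial multiplication encoded via `Option`,
with inverse, source and range maps) carrying a topology making inversion and
multiplication continuous, with open source map and a basis of open slices. -/
structure EtaleGroupoid (Γ : Type*) [TopologicalSpace Γ] where
  mul : Γ → Γ → Option Γ
  inv : Γ → Γ
  s : Γ → Γ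
  r : Γ → Γ
  s_unit : ∀ γ, mul γ (s γ) = some γ
  r_unit : ∀ γ, mul (r γ) γ = some γ
  mul_isSome : ∀ a b, (mul a b).isSome ↔ s a = r b
  inv_mul : ∀ γ, mul (inv γ) γ = some (s γ)
  mul_inv : ∀ γ, mul γ (inv γ) = some (r γ)
  inv_inv : ∀ γ, inv (inv γ) = γ
  s_inv : ∀ γ, s (inv γ) = r γ
  r_inv : ∀ γ, r (inv γ) = s γ
  s_s : ∀ γ, s (s γ) = s γ
  r_s : ∀ γ, r (s γ) = s γ
  inv_s : ∀ γ, inv (s γ) = s γ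
  s_r : ∀ γ, s (r γ) = r γ
  r_r : ∀ γ, r (r γ) = r γ
  inv_r : ∀ γ, inv (r γ) = r γ
  mul_s_s : ∀ γ, mul (s γ) (s γ) = some (s γ)
  mul_r_r : ∀ γ, mul (r γ) (r γ) = some (r γ)
  s_eq_r : ∀ {a b c}, mul a b = some c → s a = r b
  s_mul : ∀ {a b c}, mul a b = some c → s c = s b
  r_mul : ∀ {a b c}, mul a b = some c → r c = r a
  inv_mul_inv : ∀ {a b c}, mul a b = some c → mul (inv b) (inv a) = some (inv c)
  mul_assoc' : ∀ {a b c p q pc}, mul a b = some p → mul b c = some q →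
    mul p c = some pc → mul a q = some pc
  continuous_inv : Continuous inv
  continuous_s : Continuous s
  continuous_r : Continuous r
  isOpenMap_s : IsOpenMap s
  continuous_mul : Continuous fun p : {p : Γ × Γ // (mul p.1 p.2).isSome} =>
    (mul p.1.1 p.1.2).get p.2
  etale : ∀ γ : Γ, ∃ O : Set Γ, IsOpen O ∧ γ ∈ O ∧ Set.InjOn s O ∧ Set.InjOn r O

variable {Γ : Type*} [TopologicalSpace Γ]

/-- The unit space `Γ⁰` of an étale groupoid. -/
def EtaleGroupoid.units (G : EtaleGroupoid Γ) : Set Γ := Set.range G.s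

/-- A slice: a subset on which both the source and range maps are injective. -/
def EtaleGroupoid.IsSlice (G : EtaleGroupoid Γ) (B : Set Γ) : Prop :=
  Set.InjOn G.s B ∧ Set.InjOn G.r B

/-- A biclosed subset: both `s[B]` and `r[B]` are closed in the unit space `Γ⁰`. -/
def EtaleGroupoid.IsBiclosed (G : EtaleGroupoid Γ) (B : Set Γ) : Prop :=
  IsClosed ((fun u : G.units => (u : Γ)) ⁻¹' (G.s '' B)) ∧
  IsClosed ((fun u : G.units => (u : Γ)) ⁻¹' (G.r '' B))

/-- A bicompact subset: a biclosed compact subset of an open slice. -/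
def EtaleGroupoid.IsBicompact (G : EtaleGroupoid Γ) (B : Set Γ) : Prop :=
  IsCompact B ∧ G.IsBiclosed B ∧ ∃ O : Set Γ, IsOpen O ∧ G.IsSlice O ∧ B ⊆ O

/-!
The unit space `Γ⁰ = s[Γ]` is open, so nowhere density in `Γ⁰` and in `Γ` agree. Since `s` is
continuous and open, preimages of nowhere dense sets are nowhere dense, and `N ⊆ s⁻¹(s[N])`.
Conversely, on an open slice `s` is an open embedding and so preserves nowhere density; the
compact set `K` is covered by finitely many slices, and finite unions of nowhere dense sets are
nowhere dense.
-/

open Set Topology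

section NowhereDense

variable {X Y : Type*} [TopologicalSpace X] [TopologicalSpace Y]

lemma IsNowhereDense.union {A B : Set X} (hA : IsNowhereDense A) (hB : IsNowhereDense B) :
    IsNowhereDense (A ∪ B) := by
  rwa [IsNowhereDense, closure_union,
    interior_union_isClosed_of_interior_empty isClosed_closure hB]

lemma isNowhereDense_biUnion_finset {ι : Type*} {t : Finset ι} {A : ι → Set X}
    (h : ∀ i ∈ t, IsNowhereDense (A i)) : IsNowhereDense (⋃ i ∈ t, A i) := by
  classical
  induction t using Finset.induction_on with
  | empty => simp
  | insert i t _ ih =>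
    rw [Finset.set_biUnion_insert]
    exact (h i (t.mem_insert_self i)).union (ih fun j hj => h j (Finset.mem_insert_of_mem hj))

lemma IsNowhereDense.preimage_of_isOpenMap {f : X → Y} (hc : Continuous f) (ho : IsOpenMap f)
    {B : Set Y} (hB : IsNowhereDense B) : IsNowhereDense (f ⁻¹' B) := by
  rw [IsNowhereDense, ← ho.preimage_closure_eq_closure_preimage hc,
    ← ho.preimage_interior_eq_interior_preimage hc, hB, preimage_empty]

lemma IsNowhereDense.of_image {f : X → Y} (hc : Continuous f) (ho : IsOpenMap f) {A : Set X}
    (h : IsNowhereDense (f '' A)) : IsNowhereDense A :=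
  (h.preimage_of_isOpenMap hc ho).mono (subset_preimage_image f A)

lemma IsOpen.isNowhereDense_preimage_val_iff {U S : Set X} (hU : IsOpen U) (hS : S ⊆ U) :
    IsNowhereDense (Subtype.val ⁻¹' S : Set U) ↔ IsNowhereDense S := by
  refine ⟨fun h => ?_, fun h => h.preimage_of_isOpenMap continuous_subtype_val
    hU.isOpenMap_subtype_val⟩
  simpa [Subtype.image_preimage_coe, inter_eq_right.2 hS] using h.image_val

lemma IsNowhereDense.image_of_injOn {f : X → Y} (hc : Continuous f) (ho : IsOpenMap f)
    {U A : Set X} (hU : IsOpen U) (hinj : InjOn f U) (hAU : A ⊆ U) (hA : IsNowhereDense A) :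
    IsNowhereDense (f '' A) := by
  have hemb : IsOpenEmbedding (U.domRestrict f) :=
    .of_continuous_injective_isOpenMap (hc.comp continuous_subtype_val) hinj.injective
      (ho.comp hU.isOpenMap_subtype_val)
  have := hemb.isInducing.isNowhereDense_image
    ((hU.isNowhereDense_preimage_val_iff hAU).2 hA)
  rwa [domRestrict_eq, image_comp, Subtype.image_preimage_coe, inter_eq_right.2 hAU] at this

lemma IsNowhereDense.image_of_isCompact {f : X → Y} (hc : Continuous f) (ho : IsOpenMap f)
    (hloc : ∀ x, ∃ U, IsOpen U ∧ x ∈ U ∧ InjOn f U) {K A : Set X} (hK : IsCompact K)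
    (hAK : A ⊆ K) (hA : IsNowhereDense A) : IsNowhereDense (f '' A) := by
  choose U hUo hxU hinj using hloc
  obtain ⟨t, -, hcover⟩ := hK.elim_nhds_subcover U fun x _ => (hUo x).mem_nhds (hxU x)
  have hsplit : f '' A ⊆ ⋃ x ∈ t, f '' (A ∩ U x) := by
    rintro _ ⟨a, ha, rfl⟩
    obtain ⟨x, hx, haU⟩ := mem_iUnion₂.1 (hcover (hAK ha))
    exact mem_iUnion₂.2 ⟨x, hx, a, ⟨ha, haU⟩, rfl⟩
  refine (isNowhereDense_biUnion_finset fun x _ => ?_).mono hsplit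
  exact (hA.mono inter_subset_left).image_of_injOn hc ho (hUo x) (hinj x) inter_subset_right

end NowhereDense

/-- For `N ⊆ K ⊆ Γ` with `K` compact in an étale groupoid, `s[N]` is nowhere
dense in the unit space iff `N` is nowhere dense. -/
theorem stmt5 (G : EtaleGroupoid Γ) (K N : Set Γ) (hK : IsCompact K) (hN : N ⊆ K) :
    IsNowhereDense ((fun u : G.units => (u : Γ)) ⁻¹' (G.s '' N)) ↔ IsNowhereDense N := by
  have hunits : IsOpen G.units := G.isOpenMap_s.isOpen_range
  have hsN : G.s '' N ⊆ G.units := image_subset_range G.s N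
  have hloc : ∀ γ, ∃ O, IsOpen O ∧ γ ∈ O ∧ InjOn G.s O := fun γ =>
    (G.etale γ).imp fun _ hO => ⟨hO.1, hO.2.1, hO.2.2.1⟩
  rw [hunits.isNowhereDense_preimage_val_iff hsN]
  exact ⟨.of_image G.continuous_s G.isOpenMap_s,
    .image_of_isCompact G.continuous_s G.isOpenMap_s hloc hK hN⟩
end

section
/- Let Γ be an étale groupoid, K a σ-compact subset of Γ, and M ⊆ K. Then M is meagre in Γ if and only if s[M] is meagre in the unit space. -/
open Filter Topology

variable {Γ : Type*} [TopologicalSpace Γ]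

lemma nd_preimage' {X Y : Type*} [TopologicalSpace X] [TopologicalSpace Y] {f : X → Y}
    (hc : Continuous f) (ho : IsOpenMap f) {N : Set Y} (hN : IsNowhereDense N) :
    IsNowhereDense (f ⁻¹' N) := by
  rw [IsNowhereDense, Set.eq_empty_iff_forall_notMem]
  intro x hx
  have h1 : closure (f ⁻¹' N) ⊆ f ⁻¹' (closure N) := hc.closure_preimage_subset N
  have h2 : x ∈ interior (f ⁻¹' closure N) := interior_mono h1 hx
  have hsub : f '' interior (f ⁻¹' closure N) ⊆ closure N := by
    rw [Set.image_subset_iff]; exact interior_subset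
  have h3 : f x ∈ interior (closure N) :=
    interior_maximal hsub (ho _ isOpen_interior) (Set.mem_image_of_mem f h2)
  rw [hN] at h3; exact h3

lemma meagre_preimage' {X Y : Type*} [TopologicalSpace X] [TopologicalSpace Y] {f : X → Y}
    (hc : Continuous f) (ho : IsOpenMap f) {T : Set Y} (hT : IsMeagre T) :
    IsMeagre (f ⁻¹' T) := by
  rw [isMeagre_iff_countable_union_isNowhereDense] at hT ⊢
  obtain ⟨S, hnd, hcnt, hsub⟩ := hT
  refine ⟨(f ⁻¹' ·) '' S, ?_, hcnt.image _, ?_⟩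
  · rintro t ⟨u, hu, rfl⟩; exact nd_preimage' hc ho (hnd u hu)
  · intro x hx
    obtain ⟨u, hu, hxu⟩ := hsub hx
    exact ⟨f ⁻¹' u, ⟨u, hu, rfl⟩, hxu⟩

lemma nd_image' {X Y : Type*} [TopologicalSpace X] [TopologicalSpace Y] {f : X → Y}
    (hc : Continuous f) (ho : IsOpenMap f) {O : Set X} (hO : IsOpen O)
    (hinj : Set.InjOn f O) {N : Set X} (hN : IsNowhereDense N) :
    IsNowhereDense (f '' (N ∩ O)) := by
  rw [IsNowhereDense, Set.eq_empty_iff_forall_notMem]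
  intro y hy
  set V := interior (closure (f '' (N ∩ O))) with hV
  have hVopen : IsOpen V := isOpen_interior
  have hyc : y ∈ closure (f '' (N ∩ O)) := interior_subset hy
  obtain ⟨z, hzV, γ₀, ⟨hγ₀N, hγ₀O⟩, rfl⟩ := (mem_closure_iff.mp hyc) V hVopen hy
  have hWsub : f ⁻¹' V ∩ O ⊆ closure N := by
    rintro γ ⟨hγV, hγO⟩
    rw [mem_closure_iff]
    intro U hUopen hγU
    have hU' : IsOpen (U ∩ (f ⁻¹' V ∩ O)) :=
      hUopen.inter ((hVopen.preimage hc).inter hO)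
    have hγc : f γ ∈ closure (f '' (N ∩ O)) := interior_subset hγV
    obtain ⟨w, ⟨u, hu, huw⟩, n, hn, hnw⟩ :=
      (mem_closure_iff.mp hγc) (f '' (U ∩ (f ⁻¹' V ∩ O))) (ho _ hU')
        ⟨γ, ⟨hγU, hγV, hγO⟩, rfl⟩
    have : u = n := hinj hu.2.2 hn.2 (huw.trans hnw.symm)
    exact ⟨u, hu.1, this ▸ hn.1⟩
  have hmem : γ₀ ∈ interior (closure N) :=
    interior_maximal hWsub ((hVopen.preimage hc).inter hO) ⟨hzV, hγ₀O⟩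
  rw [hN] at hmem; exact hmem

/-- For `M ⊆ K ⊆ Γ` with `K` σ-compact in an étale groupoid, `M` is meagre iff
`s[M]` is meagre in the unit space. -/
theorem stmt6 (G : EtaleGroupoid Γ) (K M : Set Γ) (hK : IsSigmaCompact K) (hM : M ⊆ K) :
    IsMeagre M ↔ IsMeagre ((fun u : G.units => (u : Γ)) ⁻¹' (G.s '' M)) := by
  classical
  set f : Γ → G.units := fun γ => ⟨G.s γ, γ, rfl⟩ with hf
  have hfc : Continuous f := G.continuous_s.subtype_mk _
  have himg : ∀ A : Set Γ, f '' A = (fun u : G.units => (u : Γ)) ⁻¹' (G.s '' A) := by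
    intro A
    ext u
    constructor
    · rintro ⟨a, ha, rfl⟩; exact ⟨a, ha, rfl⟩
    · rintro ⟨a, ha, hsa⟩; exact ⟨a, ha, Subtype.ext hsa⟩
  have hfo : IsOpenMap f := by
    intro U hU
    rw [himg]
    exact (G.isOpenMap_s U hU).preimage continuous_subtype_val
  constructor
  · -- forward direction
    intro hMm
    rw [isMeagre_iff_countable_union_isNowhereDense] at hMm ⊢
    obtain ⟨S, hSnd, hScnt, hSsub⟩ := hMm
    obtain ⟨C, hCc, hCU⟩ := hK
    choose O hOopen hOmem hOsinj _hOrinj using G.etale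
    have hcov : ∀ n, C n ⊆ ⋃ γ : Γ, O γ := fun n x _ =>
      Set.mem_iUnion.mpr ⟨x, hOmem x⟩
    choose t ht using fun n => (hCc n).elim_finite_subcover O hOopen (hcov n)
    set D : Set Γ := ⋃ n, (t n : Set Γ) with hD
    have hDcnt : D.Countable := Set.countable_iUnion fun n => (t n).countable_toSet
    refine ⟨(fun p : Set Γ × Γ =>
      (fun u : G.units => (u : Γ)) ⁻¹' (G.s '' (p.1 ∩ O p.2))) '' (S ×ˢ D),
      ?_, (hScnt.prod hDcnt).image _, ?_⟩
    · rintro T ⟨⟨N, γ⟩, ⟨hN, _⟩, rfl⟩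
      have := nd_image' hfc hfo (hOopen γ)
        (fun a ha b hb hab => hOsinj γ ha hb (congrArg Subtype.val hab))
        (hSnd N hN)
      rwa [himg] at this
    · rintro u ⟨m, hm, hsm⟩
      obtain ⟨N, hN, hmN⟩ := hSsub hm
      have hmK : m ∈ ⋃ n, C n := hCU ▸ hM hm
      obtain ⟨n, hn⟩ := Set.mem_iUnion.mp hmK
      obtain ⟨γ, hγ⟩ := Set.mem_iUnion₂.mp (ht n hn)
      refine Set.mem_sUnion.mpr ⟨_, ⟨(N, γ), ⟨hN, Set.mem_iUnion.mpr ⟨n, hγ.1⟩⟩, rfl⟩, ?_⟩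
      exact ⟨m, ⟨hmN, hγ.2⟩, hsm⟩
  · -- backward direction
    intro hT
    have := meagre_preimage' hfc hfo hT
    refine this.mono ?_
    intro m hm
    exact ⟨m, hm, rfl⟩
end

section
/- If Γ is an étale groupoid and K, L ⊆ Γ are bicompact, then the product set KL = {kl : k ∈ K, l ∈ L, s(k) = r(l)} is bicompact. -/
open Filter Topology

variable {Γ : Type*} [TopologicalSpace Γ]

/-!
An open slice `O` is the graph of a partial homeomorphism between the open sets `s[O]` and `r[O]`,
so a point `c` of `KL` is recovered continuously from either of its ends: `c = k · ρ(s k)` with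
`ρ` the inverse of `r` on the slice around `L`, and `c = k · (k⁻¹ c)` with `k = ρ'(r c)`, `ρ'` the
inverse of `r` on the slice around `K`. The first description exhibits `KL` as a continuous image
of the compact set `K ∩ s⁻¹[r[L]]`, the second shows that the product of the two open slices is
open. Likewise `s[KL] = {u ∈ s[L] : r(σ u) ∈ s[K]}`, with `σ` the inverse of `s` near `L`, is
closed in `Γ⁰` because it is cut out of the closed set `s[L]` by a map continuous on it.
-/

open Function Set

section PartialInverse

variable {X Y : Type*} [TopologicalSpace X] [TopologicalSpace Y] [Nonempty X]
  {f : X → Y} {O : Set X}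

theorem Set.InjOn.continuousOn_invFunOn (hf : IsOpenMap f) (hO : IsOpen O) (hinj : O.InjOn f) :
    ContinuousOn (invFunOn f O) (f '' O) := by
  rw [continuousOn_open_iff (hf O hO)]
  intro V hV
  have hpre : f '' O ∩ invFunOn f O ⁻¹' V = f '' (O ∩ V) := by
    ext u
    constructor
    · rintro ⟨⟨a, ha, rfl⟩, hav⟩
      rw [mem_preimage, hinj.leftInvOn_invFunOn ha] at hav
      exact ⟨a, ⟨ha, hav⟩, rfl⟩
    · rintro ⟨a, ⟨ha, hav⟩, rfl⟩
      exact ⟨⟨a, ha, rfl⟩, by rwa [mem_preimage, hinj.leftInvOn_invFunOn ha]⟩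
  rw [hpre]
  exact hf _ (hO.inter hV)

theorem isClosed_preimage_val_image_inter_preimage {U : Set Y} {g : X → Y} {A : Set X}
    {B : Set Y} (hf : IsOpenMap f) (hO : IsOpen O) (hinj : O.InjOn f) (hg : ContinuousOn g O)
    (hgU : ∀ x, g x ∈ U) (hAO : A ⊆ O) (hA : IsClosed (((↑) : U → Y) ⁻¹' (f '' A)))
    (hB : IsClosed (((↑) : U → Y) ⁻¹' B)) :
    IsClosed (((↑) : U → Y) ⁻¹' (f '' (A ∩ g ⁻¹' B))) := by
  set φ : U → U := fun u => ⟨g (invFunOn f O u), hgU _⟩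
  have hφ : ContinuousOn φ (((↑) : U → Y) ⁻¹' (f '' A)) := by
    refine IsInducing.subtypeVal.continuousOn_iff.2 ?_
    refine (hg.comp (hinj.continuousOn_invFunOn hf hO) fun _ hy => invFunOn_mem hy).comp
      continuous_subtype_val.continuousOn ?_
    exact fun _ hu => image_mono hAO hu
  have hpre : ((↑) : U → Y) ⁻¹' (f '' (A ∩ g ⁻¹' B))
      = ((↑) : U → Y) ⁻¹' (f '' A) ∩ φ ⁻¹' (((↑) : U → Y) ⁻¹' B) := by
    ext u
    constructor
    · rintro ⟨a, ⟨ha, hgb⟩, hau⟩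
      refine ⟨⟨a, ha, hau⟩, ?_⟩
      change g (invFunOn f O u) ∈ B
      rwa [← hau, hinj.leftInvOn_invFunOn (hAO ha)]
    · rintro ⟨⟨a, ha, hau⟩, hgb⟩
      change g (invFunOn f O u) ∈ B at hgb
      rw [← hau, hinj.leftInvOn_invFunOn (hAO ha)] at hgb
      exact ⟨a, ⟨ha, hgb⟩, hau⟩
  rw [hpre]
  exact hφ.preimage_isClosed_of_isClosed hA hB

end PartialInverse

namespace EtaleGroupoid

variable (G : EtaleGroupoid Γ)

def setMul (K L : Set Γ) : Set Γ := {c | ∃ k ∈ K, ∃ l ∈ L, G.mul k l = some c}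

section Algebra

variable {G}

theorem setMul_mono {K L K' L' : Set Γ} (hK : K ⊆ K') (hL : L ⊆ L') :
    G.setMul K L ⊆ G.setMul K' L' :=
  fun _ ⟨k, hk, l, hl, h⟩ => ⟨k, hK hk, l, hL hl, h⟩

theorem exists_mul_eq_some {a b : Γ} (h : G.s a = G.r b) : ∃ c, G.mul a b = some c :=
  Option.isSome_iff_exists.1 ((G.mul_isSome a b).2 h)

theorem inv_mul_eq_of_mul_eq {k l c : Γ} (h : G.mul k l = some c) :
    G.mul (G.inv k) c = some l := by
  have hsl : G.mul (G.s k) l = some l := by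
    rw [G.s_eq_r h]
    exact G.r_unit l
  exact G.mul_assoc' (G.inv_mul k) h hsl

theorem mul_eq_of_inv_mul_eq {k l c : Γ} (h : G.mul (G.inv k) c = some l) :
    G.mul k l = some c := by
  have hrc : G.mul (G.r k) c = some c := by
    rw [← G.s_inv k, G.s_eq_r h]
    exact G.r_unit c
  exact G.mul_assoc' (G.mul_inv k) h hrc

theorem s_image_setMul (K L : Set Γ) :
    G.s '' G.setMul K L = G.s '' (L ∩ G.r ⁻¹' (G.s '' K)) := by
  ext u
  constructor
  · rintro ⟨c, ⟨k, hk, l, hl, h⟩, rfl⟩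
    exact ⟨l, ⟨hl, k, hk, G.s_eq_r h⟩, (G.s_mul h).symm⟩
  · rintro ⟨l, ⟨hl, k, hk, hkl⟩, rfl⟩
    obtain ⟨c, h⟩ := exists_mul_eq_some hkl
    exact ⟨c, ⟨k, hk, l, hl, h⟩, G.s_mul h⟩

theorem r_image_setMul (K L : Set Γ) :
    G.r '' G.setMul K L = G.r '' (K ∩ G.s ⁻¹' (G.r '' L)) := by
  ext u
  constructor
  · rintro ⟨c, ⟨k, hk, l, hl, h⟩, rfl⟩
    exact ⟨k, ⟨hk, l, hl, (G.s_eq_r h).symm⟩, (G.r_mul h).symm⟩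
  · rintro ⟨k, ⟨hk, l, hl, hkl⟩, rfl⟩
    obtain ⟨c, h⟩ := exists_mul_eq_some hkl.symm
    exact ⟨c, ⟨k, hk, l, hl, h⟩, G.r_mul h⟩

theorem isSlice_setMul {O P : Set Γ} (hO : G.IsSlice O) (hP : G.IsSlice P) :
    G.IsSlice (G.setMul O P) := by
  have eq_of_factors : ∀ {k l c c'}, G.mul k l = some c → G.mul k l = some c' → c = c' :=
    fun h h' => Option.some_injective _ (h.symm.trans h')
  constructor
  · rintro c ⟨k, hk, l, hl, h⟩ c' ⟨k', hk', l', hl', h'⟩ hs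
    have hll' : l = l' := hP.1 hl hl' (by rw [← G.s_mul h, ← G.s_mul h', hs])
    have hkk' : k = k' := hO.1 hk hk' (by rw [G.s_eq_r h, G.s_eq_r h', hll'])
    subst hll' hkk'
    exact eq_of_factors h h'
  · rintro c ⟨k, hk, l, hl, h⟩ c' ⟨k', hk', l', hl', h'⟩ hr
    have hkk' : k = k' := hO.2 hk hk' (by rw [← G.r_mul h, ← G.r_mul h', hr])
    have hll' : l = l' := hP.2 hl hl' (by rw [← G.s_eq_r h, ← G.s_eq_r h', hkk'])
    subst hll' hkk'
    exact eq_of_factors h h'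

end Algebra

theorem isOpenMap_r : IsOpenMap G.r := by
  have hr : G.r = G.s ∘ G.inv := funext fun γ => (G.s_inv γ).symm
  have hinv : IsOpenMap G.inv := fun U hU => by
    rw [Involutive.image_eq_preimage_symm G.inv_inv]
    exact hU.preimage G.continuous_inv
  rw [hr]
  exact G.isOpenMap_s.comp hinv

theorem s_mem_units (γ : Γ) : G.s γ ∈ G.units := ⟨γ, rfl⟩

theorem r_mem_units (γ : Γ) : G.r γ ∈ G.units := ⟨G.inv γ, G.s_inv γ⟩

theorem isClosed_preimage_s {T : Set Γ} (hT : IsClosed (((↑) : G.units → Γ) ⁻¹' T)) :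
    IsClosed (G.s ⁻¹' T) :=
  hT.preimage (G.continuous_s.codRestrict G.s_mem_units)

theorem exists_continuousOn_mul {X : Type*} [TopologicalSpace X] {f g : X → Γ} {W : Set X}
    (hf : ContinuousOn f W) (hg : ContinuousOn g W) (hfg : ∀ x ∈ W, G.s (f x) = G.r (g x)) :
    ∃ m : X → Γ, ContinuousOn m W ∧ ∀ x ∈ W, G.mul (f x) (g x) = some (m x) := by
  have hsome : ∀ x ∈ W, (G.mul (f x) (g x)).isSome := fun x hx => (G.mul_isSome _ _).2 (hfg x hx)
  refine ⟨fun x => (G.mul (f x) (g x)).getD (f x), ?_, fun x hx => ?_⟩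
  · refine continuousOn_iff_continuous_domRestrict.2 <| (G.continuous_mul.comp
      ((hf.domRestrict.prodMk hg.domRestrict).subtype_mk fun x => hsome x x.2)).congr fun x => ?_
    exact Option.get_eq_getD _
  · exact (Option.getD_of_ne_none (Option.isSome_iff_ne_none.1 (hsome x hx)) _).symm

variable [Nonempty Γ]

theorem isCompact_setMul {K L O : Set Γ} (hK : IsCompact K)
    (hL : IsClosed (((↑) : G.units → Γ) ⁻¹' (G.r '' L))) (hO : IsOpen O) (hrO : O.InjOn G.r)
    (hLO : L ⊆ O) : IsCompact (G.setMul K L) := by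
  have hρ : ∀ {k l}, l ∈ O → G.s k = G.r l → invFunOn G.r O (G.s k) = l := fun hl hkl => by
    rw [hkl, hrO.leftInvOn_invFunOn hl]
  obtain ⟨m, hmc, hm⟩ := G.exists_continuousOn_mul (W := G.s ⁻¹' (G.r '' O)) continuousOn_id
    ((hrO.continuousOn_invFunOn G.isOpenMap_r hO).comp G.continuous_s.continuousOn
      fun _ h => h)
    (fun _ ⟨_, hl, hkl⟩ => by simp only [id, comp, hρ hl hkl.symm, hkl])
  have hKL : G.setMul K L = m '' (K ∩ G.s ⁻¹' (G.r '' L)) := by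
    ext c
    constructor
    · rintro ⟨k, hk, l, hl, h⟩
      have hmk := hm k ⟨l, hLO hl, (G.s_eq_r h).symm⟩
      simp only [id, comp, hρ (hLO hl) (G.s_eq_r h), h] at hmk
      exact ⟨k, ⟨hk, l, hl, (G.s_eq_r h).symm⟩, Option.some_injective _ hmk.symm⟩
    · rintro ⟨k, ⟨hk, l, hl, hkl⟩, rfl⟩
      have hmk := hm k ⟨l, hLO hl, hkl⟩
      simp only [id, comp, hρ (hLO hl) hkl.symm] at hmk
      exact ⟨k, hk, l, hl, hmk⟩
  rw [hKL]
  exact (hK.inter_right (G.isClosed_preimage_s hL)).image_of_continuousOn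
    (hmc.mono fun _ hk => image_mono hLO hk.2)

theorem isOpen_setMul {O P : Set Γ} (hO : IsOpen O) (hrO : O.InjOn G.r) (hP : IsOpen P) :
    IsOpen (G.setMul O P) := by
  have hρ : ∀ {k c}, k ∈ O → G.r c = G.r k → invFunOn G.r O (G.r c) = k := fun hk hkc => by
    rw [hkc, hrO.leftInvOn_invFunOn hk]
  obtain ⟨m, hmc, hm⟩ := G.exists_continuousOn_mul (W := G.r ⁻¹' (G.r '' O))
    (G.continuous_inv.comp_continuousOn
      ((hrO.continuousOn_invFunOn G.isOpenMap_r hO).comp G.continuous_r.continuousOn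
        fun _ h => h))
    continuousOn_id (fun _ ⟨_, hk, hkc⟩ => by simp only [id, comp, G.s_inv, hρ hk hkc.symm, hkc])
  have hOP : G.setMul O P = G.r ⁻¹' (G.r '' O) ∩ m ⁻¹' P := by
    ext c
    constructor
    · rintro ⟨k, hk, l, hl, h⟩
      have hmc' := hm c ⟨k, hk, (G.r_mul h).symm⟩
      simp only [id, comp, hρ hk (G.r_mul h), inv_mul_eq_of_mul_eq h] at hmc'
      exact ⟨⟨k, hk, (G.r_mul h).symm⟩, by rwa [mem_preimage, ← Option.some_injective _ hmc']⟩
    · rintro ⟨⟨k, hk, hkc⟩, hmP⟩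
      have hmc' := hm c ⟨k, hk, hkc⟩
      simp only [id, comp, hρ hk hkc.symm] at hmc'
      exact ⟨k, hk, m c, hmP, mul_eq_of_inv_mul_eq hmc'⟩
  rw [hOP]
  exact hmc.isOpen_inter_preimage (G.isOpenMap_r O hO |>.preimage G.continuous_r) hP

theorem isBiclosed_setMul {K L OK OL : Set Γ} (hK : G.IsBiclosed K) (hL : G.IsBiclosed L)
    (hOK : IsOpen OK) (hrOK : OK.InjOn G.r) (hKO : K ⊆ OK)
    (hOL : IsOpen OL) (hsOL : OL.InjOn G.s) (hLO : L ⊆ OL) :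
    G.IsBiclosed (G.setMul K L) := by
  constructor
  · rw [s_image_setMul]
    exact isClosed_preimage_val_image_inter_preimage G.isOpenMap_s hOL hsOL
      G.continuous_r.continuousOn G.r_mem_units hLO hL.1 hK.1
  · rw [r_image_setMul]
    exact isClosed_preimage_val_image_inter_preimage G.isOpenMap_r hOK hrOK
      G.continuous_s.continuousOn G.s_mem_units hKO hK.2 hL.2

theorem isBicompact_setMul {K L : Set Γ} (hK : G.IsBicompact K) (hL : G.IsBicompact L) :
    G.IsBicompact (G.setMul K L) := by
  obtain ⟨hKc, hKb, OK, hOK, hOKslice, hKO⟩ := hK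
  obtain ⟨-, hLb, OL, hOL, hOLslice, hLO⟩ := hL
  exact ⟨G.isCompact_setMul hKc hLb.2 hOL hOLslice.2 hLO,
    G.isBiclosed_setMul hKb hLb hOK hOKslice.2 hKO hOL hOLslice.1 hLO,
    G.setMul OK OL, G.isOpen_setMul hOK hOKslice.2 hOL, isSlice_setMul hOKslice hOLslice,
    setMul_mono hKO hLO⟩

end EtaleGroupoid

/-- If `K` and `L` are bicompact subsets of an étale groupoid, so is `KL`. -/
theorem stmt7 (G : EtaleGroupoid Γ) (K L : Set Γ)
    (hK : G.IsBicompact K) (hL : G.IsBicompact L) :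
    G.IsBicompact {c | ∃ k ∈ K, ∃ l ∈ L, G.mul k l = some c} := by
  -- the partial inverses `invFunOn` need a point of `Γ`
  rcases isEmpty_or_nonempty Γ with hΓ | hΓ
  · rwa [eq_empty_of_isEmpty {c | ∃ k ∈ K, ∃ l ∈ L, G.mul k l = some c},
      ← eq_empty_of_isEmpty K]
  · exact G.isBicompact_setMul hK hL
end

section
/- For a Banach bundle ρ: B ↠ X and any subset Y ⊆ X, the set C₀^ρ(Y) of sections supported in Y, continuous at every point of Y, and with compact δ-supports for all δ > 0, is a closed subspace of the Banach space of bounded sections with the supremum norm. -/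
open Filter Topology
open scoped ENNReal NNReal

/-- Transport along an equality of base points between fibres. -/
def castE {X : Type*} {E : X → Type*} {α β : X} (h : α = β) (a : E α) : E β := h ▸ a

/-- A Banach bundle over a topological space `X`: the fibres `E x` are complex
Banach spaces, the (open continuous) projection is `Sigma.fst` on the total
space `Σ x, E x`, scalar multiplication and (fibrewise) addition are continuous,
the norm is upper semicontinuous, and nets whose norms tend to `0` over base
points converging to `x` converge to `0ₓ`. -/
structure BanachBundle (X : Type*) [TopologicalSpace X] (E : X → Type*)
    [∀ x, NormedAddCommGroup (E x)] [∀ x, NormedSpace ℂ (E x)]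
    [∀ x, CompleteSpace (E x)] [TopologicalSpace (Σ x, E x)] : Prop where
  continuous_proj : Continuous (Sigma.fst : (Σ x, E x) → X)
  isOpenMap_proj : IsOpenMap (Sigma.fst : (Σ x, E x) → X)
  continuous_smul : ∀ z : ℂ, Continuous (fun b : Σ x, E x => (⟨b.1, z • b.2⟩ : Σ x, E x))
  continuous_add : Continuous (fun p : {p : (Σ x, E x) × (Σ x, E x) // p.1.1 = p.2.1} =>
      (⟨p.1.1.1, p.1.1.2 + castE p.2.symm p.1.2.2⟩ : Σ x, E x))
  usc_norm : UpperSemicontinuous (fun b : Σ x, E x => ‖b.2‖)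
  zero_lim : ∀ (l : Filter (Σ x, E x)) (x : X), Tendsto Sigma.fst l (𝓝 x) →
      Tendsto (fun b : Σ x, E x => ‖b.2‖) l (𝓝 (0 : ℝ)) →
      l ≤ 𝓝 (⟨x, 0⟩ : Σ x, E x)

variable {X : Type*} [TopologicalSpace X] {E : X → Type*}
  [∀ x, NormedAddCommGroup (E x)] [∀ x, NormedSpace ℂ (E x)]
  [∀ x, CompleteSpace (E x)] [TopologicalSpace (Σ x, E x)]

/-- Membership in `C₀^ρ(Y)`: a section supported in `Y`, continuous at every
point of `Y`, all of whose `δ`-supports are compact. -/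
def MemC0 (Y : Set X) (a : ∀ x, E x) : Prop :=
  {x | a x ≠ 0} ⊆ Y ∧
  (∀ y ∈ Y, ContinuousAt (fun x => (⟨x, a x⟩ : Σ x, E x)) y) ∧
  ∀ δ : ℝ, 0 < δ → IsCompact {x | δ ≤ ‖a x‖}

/-!
Two features of the bundle topology carry the whole argument. Near a zero element `⟨y, 0⟩` the
sets `{b | b.1 ∈ U, ‖b.2‖ < ε}` form a neighbourhood basis (this is `zero_lim`), so continuity of
addition yields a tube around any point `⟨y, v⟩`: if `⟨x, p⟩` is close to `⟨y, v⟩` and `‖q‖` is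
small, then `⟨x, p + q⟩` is close to `⟨y, v⟩`. Upper semicontinuity of the norm makes a
`δ`-support closed inside any compact set containing it, and bounds a section on its compact
`1`-support.

For a uniform limit `a` of sections `uₙ`, writing `a = uₙ + (a - uₙ)` and using the tube around
`⟨y, a y⟩` gives continuity at every `y ∈ Y`, while the `δ`-support of `a` lies in the compact
`δ/2`-support of any `uₙ` that is uniformly `δ/2`-close to `a`.
-/

open Set

section UpperSemicontinuous

variable {α : Type*} [TopologicalSpace α] {f : α → ℝ} {c : ℝ}

lemma isCompact_setOf_le_of_subset {K : Set α} (hK : IsCompact K) (hsub : {x | c ≤ f x} ⊆ K)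
    (hf : ∀ x ∈ K, UpperSemicontinuousAt f x) : IsCompact {x | c ≤ f x} := by
  have hclosed : K ∩ closure {x | c ≤ f x} ⊆ {x | c ≤ f x} := by
    rintro x ⟨hxK, hxc⟩
    by_contra hlt
    obtain ⟨x', hx'lt, hx'le⟩ := mem_closure_iff_nhds.1 hxc _ (hf x hxK c (not_le.1 hlt))
    exact (show f x' < c from hx'lt).not_ge hx'le
  rw [subset_antisymm (fun x hx => ⟨hsub hx, subset_closure hx⟩) hclosed]
  exact hK.inter_right isClosed_closure

lemma bddAbove_range_of_isCompact_setOf_le (hK : IsCompact {x | c ≤ f x})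
    (hf : ∀ x, c ≤ f x → UpperSemicontinuousAt f x) : BddAbove (range f) := by
  obtain ⟨M, hM⟩ := UpperSemicontinuousOn.bddAbove_of_isCompact hK
    fun x hx => (hf x hx).upperSemicontinuousWithinAt _
  refine ⟨max c M, forall_mem_range.2 fun x => ?_⟩
  by_cases hx : c ≤ f x
  · exact (hM (mem_image_of_mem f hx)).trans (le_max_right _ _)
  · exact (not_le.1 hx).le.trans (le_max_left _ _)

end UpperSemicontinuous

lemma eventually_forall_lt_of_tendsto_iSup {ι α : Type*} {l : Filter ι} {g : ι → α → ℝ≥0}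
    (h : Tendsto (fun n => ⨆ x, (g n x : ℝ≥0∞)) l (𝓝 0)) {ε : ℝ} (hε : 0 < ε) :
    ∀ᶠ n in l, ∀ x, (g n x : ℝ) < ε := by
  filter_upwards [h.eventually (gt_mem_nhds (ENNReal.ofReal_pos.2 hε))] with n hn x
  have hlt := (le_iSup (fun x => (g n x : ℝ≥0∞)) x).trans_lt hn
  rwa [← ENNReal.ofReal_coe_nnreal, ENNReal.ofReal_lt_ofReal_iff hε] at hlt

namespace BanachBundle

lemma exists_of_mem_nhds_zero (B : BanachBundle X E) {y : X} {V : Set (Σ x, E x)}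
    (hV : V ∈ 𝓝 (⟨y, 0⟩ : Σ x, E x)) :
    ∃ U ∈ 𝓝 y, ∃ ε > (0 : ℝ), ∀ b : Σ x, E x, b.1 ∈ U → ‖b.2‖ < ε → b ∈ V := by
  have hle : comap Sigma.fst (𝓝 y) ⊓ comap (fun b : Σ x, E x => ‖b.2‖) (𝓝 0) ≤
      𝓝 (⟨y, 0⟩ : Σ x, E x) :=
    B.zero_lim _ y (tendsto_comap.mono_left inf_le_left) (tendsto_comap.mono_left inf_le_right)
  obtain ⟨t₁, ⟨U, hU, hUt⟩, t₂, ⟨T, hT, hTt⟩, rfl⟩ := mem_inf_iff.1 (hle hV)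
  obtain ⟨ε, hε, hball⟩ := Metric.mem_nhds_iff.1 hT
  exact ⟨U, hU, ε, hε, fun b hb hbε => ⟨hUt hb, hTt (hball (by simpa using hbε))⟩⟩

lemma exists_isOpen_add_mem (B : BanachBundle X E) {y : X} {v : E y} {N : Set (Σ x, E x)}
    (hN : N ∈ 𝓝 (⟨y, v⟩ : Σ x, E x)) :
    ∃ V, IsOpen V ∧ (⟨y, v⟩ : Σ x, E x) ∈ V ∧ ∃ U ∈ 𝓝 y, ∃ ε > (0 : ℝ),
      ∀ x (p q : E x), ⟨x, p⟩ ∈ V → x ∈ U → ‖q‖ < ε → (⟨x, p + q⟩ : Σ x, E x) ∈ N := by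
  have hN' : N ∈ 𝓝 (⟨y, v + castE rfl 0⟩ : Σ x, E x) := by
    rwa [show castE rfl (0 : E y) = 0 from rfl, add_zero]
  have hpre := B.continuous_add.continuousAt.preimage_mem_nhds
    (x := ⟨(⟨y, v⟩, ⟨y, 0⟩), rfl⟩) hN'
  rw [nhds_subtype_eq_comap, mem_comap] at hpre
  obtain ⟨W, hW, hWN⟩ := hpre
  obtain ⟨V, V₀, hV, hyV, hV₀, hyV₀, hVW⟩ := mem_nhds_prod_iff'.1 hW
  obtain ⟨U, hU, ε, hε, hUε⟩ := B.exists_of_mem_nhds_zero (hV₀.mem_nhds hyV₀)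
  exact ⟨V, hV, hyV, U, hU, ε, hε, fun x p q hp hx hq =>
    @hWN ⟨(⟨x, p⟩, ⟨x, q⟩), rfl⟩ (hVW ⟨hp, hUε ⟨x, q⟩ hx hq⟩)⟩

lemma continuous_mk (B : BanachBundle X E) (y : X) :
    Continuous (Sigma.mk y : E y → Σ x, E x) := by
  refine continuous_iff_continuousAt.2 fun v => continuousAt_def.2 fun N hN => ?_
  obtain ⟨V, -, hyV, U, hU, ε, hε, hVN⟩ := B.exists_isOpen_add_mem hN
  filter_upwards [Metric.ball_mem_nhds v hε] with w hw
  simpa using hVN y v (w - v) hyV (mem_of_mem_nhds hU) (by rwa [← dist_eq_norm])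

lemma continuousAt_add (B : BanachBundle X E) {a b : ∀ x, E x} {y : X}
    (ha : ContinuousAt (fun x => (⟨x, a x⟩ : Σ x, E x)) y)
    (hb : ContinuousAt (fun x => (⟨x, b x⟩ : Σ x, E x)) y) :
    ContinuousAt (fun x => (⟨x, a x + b x⟩ : Σ x, E x)) y := by
  have hpair : ContinuousAt (fun x =>
      (⟨(⟨x, a x⟩, ⟨x, b x⟩), rfl⟩ : {p : (Σ x, E x) × (Σ x, E x) // p.1.1 = p.2.1})) y := by
    rw [ContinuousAt, tendsto_subtype_rng]
    exact ha.prodMk hb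
  exact B.continuous_add.continuousAt.comp hpair

lemma continuousAt_of_forall_norm_sub_lt (B : BanachBundle X E) {a : ∀ x, E x} {y : X}
    (h : ∀ ε > (0 : ℝ), ∃ b : ∀ x, E x,
      ContinuousAt (fun x => (⟨x, b x⟩ : Σ x, E x)) y ∧ ∀ x, ‖a x - b x‖ < ε) :
    ContinuousAt (fun x => (⟨x, a x⟩ : Σ x, E x)) y := by
  refine continuousAt_def.2 fun N hN => ?_
  obtain ⟨V, hV, hyV, U, hU, ε, hε, hVN⟩ := B.exists_isOpen_add_mem hN
  obtain ⟨η, hη, hball⟩ := Metric.isOpen_iff.1 (hV.preimage (B.continuous_mk y)) (a y) hyV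
  obtain ⟨b, hb, hab⟩ := h (min ε η) (lt_min hε hη)
  have hyb : (⟨y, b y⟩ : Σ x, E x) ∈ V := hball <| by
    rw [Metric.mem_ball, dist_comm, dist_eq_norm]
    exact (hab y).trans_le (min_le_right _ _)
  filter_upwards [hb (hV.mem_nhds hyb), hU] with x hxV hxU
  simpa using hVN x (b x) (a x - b x) hxV hxU ((hab x).trans_le (min_le_left _ _))

lemma upperSemicontinuousAt_norm (B : BanachBundle X E) {a : ∀ x, E x} {y : X}
    (ha : ContinuousAt (fun x => (⟨x, a x⟩ : Σ x, E x)) y) :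
    UpperSemicontinuousAt (fun x => ‖a x‖) y :=
  (B.usc_norm.upperSemicontinuousAt _).comp ha

end BanachBundle

namespace MemC0

variable {Y : Set X} {a b : ∀ x, E x}

set_option linter.unusedSectionVars false in
lemma mem_of_le_norm (ha : MemC0 Y a) {δ : ℝ} (hδ : 0 < δ) {x : X} (hx : δ ≤ ‖a x‖) : x ∈ Y :=
  ha.1 (norm_pos_iff.1 (hδ.trans_le hx))

lemma bddAbove (B : BanachBundle X E) (ha : MemC0 Y a) : BddAbove (range fun x => ‖a x‖) :=
  bddAbove_range_of_isCompact_setOf_le (ha.2.2 1 one_pos) fun x hx =>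
    B.upperSemicontinuousAt_norm (ha.2.1 x (ha.mem_of_le_norm one_pos hx))

lemma add (B : BanachBundle X E) (ha : MemC0 Y a) (hb : MemC0 Y b) :
    MemC0 Y (fun x => a x + b x) := by
  refine ⟨fun x hx => ?_, fun y hy => B.continuousAt_add (ha.2.1 y hy) (hb.2.1 y hy),
    fun δ hδ => ?_⟩
  · rcases ne_or_eq (a x) 0 with hax | hax
    · exact ha.1 hax
    · exact hb.1 (by simpa [hax] using hx)
  · have hδ₂ : 0 < δ / 2 := half_pos hδ
    refine isCompact_setOf_le_of_subset ((ha.2.2 _ hδ₂).union (hb.2.2 _ hδ₂))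
      (fun x hx => ?_) fun x hx => ?_
    · by_contra hsmall
      have hxa : ‖a x‖ < δ / 2 := not_le.1 fun h => hsmall (Or.inl h)
      have hxb : ‖b x‖ < δ / 2 := not_le.1 fun h => hsmall (Or.inr h)
      linarith [norm_add_le (a x) (b x), show δ ≤ ‖a x + b x‖ from hx]
    · have hxY : x ∈ Y := hx.elim (ha.mem_of_le_norm hδ₂) (hb.mem_of_le_norm hδ₂)
      exact B.upperSemicontinuousAt_norm (B.continuousAt_add (ha.2.1 x hxY) (hb.2.1 x hxY))

lemma smul (B : BanachBundle X E) (z : ℂ) (ha : MemC0 Y a) : MemC0 Y (fun x => z • a x) := by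
  refine ⟨fun x hx => ha.1 (right_ne_zero_of_smul hx),
    fun y hy => (B.continuous_smul z).continuousAt.comp (ha.2.1 y hy), fun δ hδ => ?_⟩
  rcases eq_or_ne z 0 with rfl | hz
  · simp [not_le.2 hδ]
  · have hz' : 0 < ‖z‖ := norm_pos_iff.2 hz
    simpa only [norm_smul, ← div_le_iff₀' hz'] using ha.2.2 _ (div_pos hδ hz')

lemma of_tendsto (B : BanachBundle X E) {ι : Type*} {l : Filter ι} [l.NeBot]
    {u : ι → ∀ x, E x} (hu : ∀ n, MemC0 Y (u n))
    (h : Tendsto (fun n => ⨆ x, (‖u n x - a x‖₊ : ℝ≥0∞)) l (𝓝 0)) : MemC0 Y a := by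
  have hclose : ∀ ε > (0 : ℝ), ∃ n, ∀ x, ‖a x - u n x‖ < ε := fun ε hε =>
    (eventually_forall_lt_of_tendsto_iSup h hε).exists.imp fun n hn x => by
      simpa [norm_sub_rev] using hn x
  have hsupp : {x | a x ≠ 0} ⊆ Y := fun x hx => by
    obtain ⟨n, hn⟩ := hclose ‖a x‖ (norm_pos_iff.2 hx)
    exact (hu n).1 fun hux => by simpa [hux] using hn x
  have hcont : ∀ y ∈ Y, ContinuousAt (fun x => (⟨x, a x⟩ : Σ x, E x)) y :=
    fun y hy => B.continuousAt_of_forall_norm_sub_lt fun ε hε =>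
      let ⟨n, hn⟩ := hclose ε hε
      ⟨u n, (hu n).2.1 y hy, hn⟩
  refine ⟨hsupp, hcont, fun δ hδ => ?_⟩
  obtain ⟨n, hn⟩ := hclose (δ / 2) (half_pos hδ)
  refine isCompact_setOf_le_of_subset ((hu n).2.2 _ (half_pos hδ)) (fun x hx => ?_)
    fun x hx => B.upperSemicontinuousAt_norm (hcont x ((hu n).mem_of_le_norm (half_pos hδ) hx))
  change δ ≤ ‖a x‖ at hx
  change δ / 2 ≤ ‖u n x‖
  linarith [hn x, norm_le_norm_add_norm_sub' (a x) (u n x)]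

end MemC0

/-- `C₀^ρ(Y)` is a closed subspace of the Banach space of bounded sections with
the supremum norm: its members are bounded, it is closed under addition and
scalar multiplication, and under uniform limits. -/
theorem stmt9 (B : BanachBundle X E) (Y : Set X) :
    (∀ a : ∀ x, E x, MemC0 Y a → BddAbove (Set.range fun x => ‖a x‖)) ∧
    (∀ a b : ∀ x, E x, MemC0 Y a → MemC0 Y b → MemC0 Y (fun x => a x + b x)) ∧
    (∀ (z : ℂ) (a : ∀ x, E x), MemC0 Y a → MemC0 Y (fun x => z • a x)) ∧
    (∀ (u : ℕ → ∀ x, E x) (a : ∀ x, E x), (∀ n, MemC0 Y (u n)) →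
      Tendsto (fun n => ⨆ x, (‖u n x - a x‖₊ : ℝ≥0∞)) atTop (𝓝 0) →
      MemC0 Y a) :=
  ⟨fun _ ha => ha.bddAbove B, fun _ _ ha hb => ha.add B hb, fun z _ ha => ha.smul B z,
    fun _ _ hu h => MemC0.of_tendsto B hu h⟩
end
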